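/- arXiv:1910.08212 — 5 statements merged into one kernel-verified Lean document; each statement's English description precedes it below -/
import Mathlib

section
/- Let (R_k) be a sequence of nonnegative reals satisfying R_{k+1} - R_k ≥ -2ηλ R_k - 2η²Λ D √(R_k) + η² D² for all k, where η, λ, Λ, D > 0 and 1 - 2ηλ > 0. If R_{k*} ≥ z₀² for some index k*, where z₀ = (-2ηΛD + √(4η²Λ²D² + 8ηλD²))/(4λ), and η²ΛD/(1-2ηλ) ≤ z₀, then R_k ≥ z₀² for all k > k*. -/
theorem stmt_0
    (η lam Λ D z₀ : ℝ) (R : ℕ → ℝ)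
    (hη : 0 < η) (hlam : 0 < lam) (hΛ : 0 < Λ) (hD : 0 < D)
    (hstep : 0 < 1 - 2 * η * lam)
    (hz₀ : z₀ = (-2 * η * Λ * D + Real.sqrt (4 * η ^ 2 * Λ ^ 2 * D ^ 2 + 8 * η * lam * D ^ 2)) / (4 * lam))
    (hRnonneg : ∀ k, 0 ≤ R k)
    (hrec : ∀ k, R (k + 1) - R k ≥
      -2 * η * lam * R k - 2 * η ^ 2 * Λ * D * Real.sqrt (R k) + η ^ 2 * D ^ 2)
    (hsmall : η ^ 2 * Λ * D / (1 - 2 * η * lam) ≤ z₀)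
    (kstar : ℕ) (hkstar : R kstar ≥ z₀ ^ 2) :
    ∀ k, kstar < k → R k ≥ z₀ ^ 2 := by
  set A := 4 * η ^ 2 * Λ ^ 2 * D ^ 2 + 8 * η * lam * D ^ 2 with hA
  have hAnn : 0 ≤ A := by positivity
  have hs : Real.sqrt A ^ 2 = A := Real.sq_sqrt hAnn
  have hsge : Real.sqrt A ≥ 2 * η * Λ * D := by
    have : Real.sqrt ((2 * η * Λ * D) ^ 2) ≤ Real.sqrt A := by
      apply Real.sqrt_le_sqrt; rw [hA]; nlinarith [mul_pos (mul_pos hη hlam) (mul_pos hD hD)]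
    rwa [Real.sqrt_sq (by positivity)] at this
  have hz0nn : 0 ≤ z₀ := by
    rw [hz₀]; apply div_nonneg _ (by positivity); linarith
  have hquad : 2 * lam * z₀ ^ 2 + 2 * η * Λ * D * z₀ = η * D ^ 2 := by
    have h4 : 4 * lam * z₀ = -2 * η * Λ * D + Real.sqrt A := by
      rw [hz₀]; field_simp
    have hs' : Real.sqrt A ^ 2 = 4 * η ^ 2 * Λ ^ 2 * D ^ 2 + 8 * η * lam * D ^ 2 := by rw [hs, hA]
    have h5 : (4 * lam * z₀ + 2 * η * Λ * D) ^ 2 = 4 * η ^ 2 * Λ ^ 2 * D ^ 2 + 8 * η * lam * D ^ 2 := by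
      rw [show 4 * lam * z₀ + 2 * η * Λ * D = Real.sqrt A by linarith]; exact hs'
    have h6 : lam * (2 * lam * z₀ ^ 2 + 2 * η * Λ * D * z₀ - η * D ^ 2) = 0 := by
      linear_combination h5 / 8
    rcases mul_eq_zero.mp h6 with h | h
    · exact absurd h hlam.ne'
    · linarith
  have hsm : η ^ 2 * Λ * D ≤ (1 - 2 * η * lam) * z₀ := by
    rw [div_le_iff₀ hstep] at hsmall; linarith
  have step : ∀ k, R k ≥ z₀ ^ 2 → R (k + 1) ≥ z₀ ^ 2 := by
    intro k hk
    set x := Real.sqrt (R k) with hx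
    have hxnn : 0 ≤ x := Real.sqrt_nonneg _
    have hx2 : x ^ 2 = R k := Real.sq_sqrt (hRnonneg k)
    have hxge : x ≥ z₀ := by
      have : Real.sqrt (z₀ ^ 2) ≤ x := Real.sqrt_le_sqrt hk
      rwa [Real.sqrt_sq hz0nn] at this
    have h := hrec k
    nlinarith [h, hx2, hquad, mul_nonneg (sub_nonneg.2 hxge)
      (sub_nonneg.2 (le_trans hsm (by nlinarith : (1 - 2 * η * lam) * z₀ ≤
        (1 - 2 * η * lam) * ((x + z₀) / 2)))), sq_nonneg η]
  intro k hkk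
  induction k with
  | zero => omega
  | succ n ih =>
    rcases Nat.lt_succ_iff_lt_or_eq.mp hkk with h | h
    · exact step n (ih h)
    · exact step n (h ▸ hkstar)
end

section
/- Let (R_k) be a sequence of nonnegative reals satisfying R_{k+1} - R_k ≥ -2ηλ R_k - 2η²Λ D √(R_k) + η² D² for all k, with η, λ, Λ, D > 0, η < 1/(2λ), and η²ΛD/(1-2ηλ) ≤ z₀ where z₀ = (-2ηΛD + √(4η²Λ²D² + 8ηλD²))/(4λ). Then for every k ≥ 0, if R_k < z₀² then R_{k+1} > R_k. -/
/-!
Writing `s = √R_k`, the lower bound on `R_{k+1} - R_k` equals `η (η D² - (2λ s² + 2ηΛD s))`.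
Since `z₀` is the nonnegative root of `2λ z² + 2ηΛD z = η D²` and `z ↦ 2λ z² + 2ηΛD z` is strictly
increasing on `[0, ∞)`, this is positive as soon as `s < z₀`, i.e. `R_k < z₀²`.
-/

open Real

noncomputable def quadraticPosRoot (a b c : ℝ) : ℝ :=
  (-b + √(b ^ 2 + 4 * a * c)) / (2 * a)

lemma quadraticPosRoot_spec {a c : ℝ} (b : ℝ) (ha : 0 < a) (hc : 0 ≤ c) :
    a * quadraticPosRoot a b c ^ 2 + b * quadraticPosRoot a b c = c := by
  have hsq : √(b ^ 2 + 4 * a * c) ^ 2 = b ^ 2 + 4 * a * c := sq_sqrt (by positivity)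
  unfold quadraticPosRoot
  generalize √(b ^ 2 + 4 * a * c) = d at hsq ⊢
  field_simp
  linear_combination hsq

lemma quadraticPosRoot_nonneg {a c : ℝ} (b : ℝ) (ha : 0 < a) (hc : 0 ≤ c) :
    0 ≤ quadraticPosRoot a b c := by
  have hb : b ≤ √(b ^ 2 + 4 * a * c) :=
    (le_abs_self b).trans (abs_le_sqrt (by nlinarith))
  unfold quadraticPosRoot
  exact div_nonneg (by linarith) (by positivity)

lemma mul_sq_add_mul_lt_of_lt {a b s z : ℝ} (ha : 0 < a) (hb : 0 ≤ b) (hs : 0 ≤ s) (hsz : s < z) :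
    a * s ^ 2 + b * s < a * z ^ 2 + b * z := by
  nlinarith [mul_lt_mul_of_pos_left (mul_self_lt_mul_self hs hsz) ha]

theorem stmt_1_general
    (η lam Λ D z₀ : ℝ) (R : ℕ → ℝ)
    (hη : 0 < η) (hlam : 0 < lam) (hΛ : 0 < Λ) (hD : 0 < D)
    (hz₀ : z₀ = (-2 * η * Λ * D + Real.sqrt (4 * η ^ 2 * Λ ^ 2 * D ^ 2 + 8 * η * lam * D ^ 2)) / (4 * lam))
    (hRnonneg : ∀ k, 0 ≤ R k)
    (hrec : ∀ k, R (k + 1) - R k ≥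
      -2 * η * lam * R k - 2 * η ^ 2 * Λ * D * Real.sqrt (R k) + η ^ 2 * D ^ 2) :
    ∀ k, R k < z₀ ^ 2 → R (k + 1) > R k := by
  intro k hk
  have hz : z₀ = quadraticPosRoot (2 * lam) (2 * η * Λ * D) (η * D ^ 2) := by
    rw [hz₀, quadraticPosRoot]
    ring_nf
  have hlam2 : 0 < 2 * lam := by positivity
  have hc : 0 ≤ η * D ^ 2 := by positivity
  have hroot := quadraticPosRoot_spec (2 * η * Λ * D) hlam2 hc
  have hz_nonneg := quadraticPosRoot_nonneg (2 * η * Λ * D) hlam2 hc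
  rw [← hz] at hroot hz_nonneg
  have hs : √(R k) < z₀ := by
    simpa [sqrt_sq hz_nonneg] using sqrt_lt_sqrt (hRnonneg k) hk
  have hlt := mul_sq_add_mul_lt_of_lt hlam2 (b := 2 * η * Λ * D) (by positivity) (sqrt_nonneg _) hs
  rw [sq_sqrt (hRnonneg k), hroot] at hlt
  linarith [hrec k, mul_lt_mul_of_pos_left hlt hη]

theorem stmt_1
    (η lam Λ D z₀ : ℝ) (R : ℕ → ℝ)
    (hη : 0 < η) (hlam : 0 < lam) (hΛ : 0 < Λ) (hD : 0 < D)
    (hη2 : η < 1 / (2 * lam))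
    (hz₀ : z₀ = (-2 * η * Λ * D + Real.sqrt (4 * η ^ 2 * Λ ^ 2 * D ^ 2 + 8 * η * lam * D ^ 2)) / (4 * lam))
    (hRnonneg : ∀ k, 0 ≤ R k)
    (hrec : ∀ k, R (k + 1) - R k ≥
      -2 * η * lam * R k - 2 * η ^ 2 * Λ * D * Real.sqrt (R k) + η ^ 2 * D ^ 2)
    (hsmall : η ^ 2 * Λ * D / (1 - 2 * η * lam) ≤ z₀) :
    ∀ k, R k < z₀ ^ 2 → R (k + 1) > R k :=
  stmt_1_general η lam Λ D z₀ R hη hlam hΛ hD hz₀ hRnonneg hrec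
end

section
/- Let (R_k) be a bounded sequence of nonnegative reals satisfying R_{k+1} ≥ (1-2ηλ) R_k - 2η²Λ D √(R_k) + η² D² for all k, with η, λ, Λ, D > 0 and η < 1/(2λ). Then limsup_{k→∞} R_k ≥ z₀², where z₀ = (-2ηΛD + √(4η²Λ²D² + 8ηλD²))/(4λ). -/
theorem stmt_3
    (η lam Λ D z₀ : ℝ) (R : ℕ → ℝ)
    (hη : 0 < η) (hlam : 0 < lam) (hΛ : 0 < Λ) (hD : 0 < D)
    (hη2 : η < 1 / (2 * lam))
    (hz₀ : z₀ = (-2 * η * Λ * D + Real.sqrt (4 * η ^ 2 * Λ ^ 2 * D ^ 2 + 8 * η * lam * D ^ 2)) / (4 * lam))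
    (hRnonneg : ∀ k, 0 ≤ R k)
    (hbdd : ∃ M, ∀ k, R k ≤ M)
    (hrec : ∀ k, R (k + 1) ≥
      (1 - 2 * η * lam) * R k - 2 * η ^ 2 * Λ * D * Real.sqrt (R k) + η ^ 2 * D ^ 2) :
    Filter.limsup R Filter.atTop ≥ z₀ ^ 2 := by
  obtain ⟨M, hM⟩ := hbdd
  have hbddu : Filter.IsBoundedUnder (· ≤ ·) Filter.atTop R :=
    ⟨M, Filter.eventually_map.mpr (Filter.Eventually.of_forall hM)⟩
  set s := Real.sqrt (4 * η ^ 2 * Λ ^ 2 * D ^ 2 + 8 * η * lam * D ^ 2) with hs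
  have hs0 : 0 ≤ s := Real.sqrt_nonneg _
  have hssq : s ^ 2 = 4 * η ^ 2 * Λ ^ 2 * D ^ 2 + 8 * η * lam * D ^ 2 := by
    rw [hs]; exact Real.sq_sqrt (by positivity)
  have h4 : 4 * lam * z₀ = -2 * η * Λ * D + s := by
    rw [hz₀]; field_simp
  have hsgt : 2 * η * Λ * D < s := by
    nlinarith [hssq, hs0, mul_pos (mul_pos hη hlam) (mul_pos hD hD), (by positivity : (0:ℝ) < 2 * η * Λ * D)]
  have hz0pos : 0 < z₀ := by nlinarith [h4, hsgt]
  have hz0eq : 2 * lam * z₀ ^ 2 + 2 * η * Λ * D * z₀ = η * D ^ 2 := by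
    nlinarith [hssq, h4]
  by_contra hcon
  push_neg at hcon
  set L := Filter.limsup R Filter.atTop with hL
  have hL0 : 0 ≤ L :=
    Filter.le_limsup_of_frequently_le (Filter.Frequently.of_forall hRnonneg) hbddu
  set c := (L + z₀ ^ 2) / 2 with hc
  have hcL : L < c := by
    rw [hc]; linarith
  have hcz : c < z₀ ^ 2 := by rw [hc]; linarith
  have hc0 : 0 ≤ c := by rw [hc]; nlinarith
  set t := Real.sqrt c with ht
  have ht0 : 0 ≤ t := Real.sqrt_nonneg _
  have htsq : t ^ 2 = c := Real.sq_sqrt hc0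
  have htz : t < z₀ := by nlinarith
  -- h(t) < 0
  have e1 : 2 * lam * c < 2 * lam * z₀ ^ 2 :=
    mul_lt_mul_of_pos_left hcz (by positivity)
  have e2 : 2 * η * Λ * D * t < 2 * η * Λ * D * z₀ :=
    mul_lt_mul_of_pos_left htz (by positivity)
  have hht : 2 * lam * c + 2 * η * Λ * D * t < η * D ^ 2 := by linarith
  set ε := η * (η * D ^ 2 - 2 * lam * c - 2 * η * Λ * D * t) with hε
  have hε0 : 0 < ε := by
    apply mul_pos hη; linarith
  obtain ⟨N, hN⟩ := Filter.eventually_atTop.mp (Filter.eventually_lt_of_limsup_lt hcL hbddu)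
  have step : ∀ k, N ≤ k → R k + ε ≤ R (k + 1) := by
    intro k hk
    have h1 := hrec k
    have h2 : R k < c := hN k hk
    have h3 : Real.sqrt (R k) ≤ t := Real.sqrt_le_sqrt h2.le
    have hmul1 : 2 * η * lam * R k ≤ 2 * η * lam * c :=
      mul_le_mul_of_nonneg_left h2.le (by positivity)
    have hmul2 : 2 * η ^ 2 * Λ * D * Real.sqrt (R k) ≤ 2 * η ^ 2 * Λ * D * t :=
      mul_le_mul_of_nonneg_left h3 (by positivity)
    rw [hε]; linarith [h1, hmul1, hmul2]
  have grow : ∀ n : ℕ, R N + n * ε ≤ R (N + n) := by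
    intro n
    induction n with
    | zero => simp
    | succ m ih =>
        have := step (N + m) (Nat.le_add_right N m)
        push_cast
        have : R N + m * ε + ε ≤ R (N + m + 1) := by linarith
        calc R N + (m + 1 : ℝ) * ε = R N + m * ε + ε := by ring
          _ ≤ R (N + m + 1) := this
          _ = R (N + (m + 1)) := by ring_nf
  obtain ⟨n, hn⟩ := exists_nat_gt ((c - R N) / ε)
  have hn' : c - R N < n * ε := by
    rwa [div_lt_iff₀ hε0] at hn
  have := grow n
  have := hN (N + n) (Nat.le_add_right N n)
  linarith
end

section
/- Let (R_k) be a bounded sequence of nonnegative reals satisfying R_{k+1} ≥ (1-2ηλ) R_k - 2η²Λ D √(R_k) + η² D² for all k, with η, λ, Λ, D > 0, η < 1/(2λ), and η²ΛD/(1-2ηλ) ≤ z₀ where z₀ = (-2ηΛD + √(4η²Λ²D² + 8ηλD²))/(4λ). Then liminf_{k→∞} R_k ≥ z₀². -/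
lemma stmt4_aux_mono (lam c a b : ℝ) (hlam : 0 ≤ lam) (hc : 0 ≤ c) (ha : 0 ≤ a)
    (hab : a ≤ b) : 2 * lam * a ^ 2 + c * a ≤ 2 * lam * b ^ 2 + c * b := by
  nlinarith [mul_nonneg (mul_nonneg hlam (sub_nonneg.2 hab)) (by linarith : (0:ℝ) ≤ a + b),
    mul_nonneg hc (sub_nonneg.2 hab)]

lemma stmt4_aux_mono_strict (lam c a b : ℝ) (hlam : 0 < lam) (hc : 0 < c) (ha : 0 ≤ a)
    (hab : a < b) : 2 * lam * a ^ 2 + c * a < 2 * lam * b ^ 2 + c * b := by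
  nlinarith [mul_pos (mul_pos hlam (sub_pos.2 hab)) (by linarith : (0:ℝ) < a + b),
    mul_pos hc (sub_pos.2 hab)]

theorem stmt_4
    (η lam Λ D z₀ : ℝ) (R : ℕ → ℝ)
    (hη : 0 < η) (hlam : 0 < lam) (hΛ : 0 < Λ) (hD : 0 < D)
    (hη2 : η < 1 / (2 * lam))
    (hz₀ : z₀ = (-2 * η * Λ * D + Real.sqrt (4 * η ^ 2 * Λ ^ 2 * D ^ 2 + 8 * η * lam * D ^ 2)) / (4 * lam))
    (hRnonneg : ∀ k, 0 ≤ R k)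
    (hbdd : ∃ M, ∀ k, R k ≤ M)
    (hrec : ∀ k, R (k + 1) ≥
      (1 - 2 * η * lam) * R k - 2 * η ^ 2 * Λ * D * Real.sqrt (R k) + η ^ 2 * D ^ 2)
    (hsmall : η ^ 2 * Λ * D / (1 - 2 * η * lam) ≤ z₀) :
    Filter.liminf R Filter.atTop ≥ z₀ ^ 2 := by
  obtain ⟨M, hM⟩ := hbdd
  have h1 : 0 < 1 - 2 * η * lam := by
    have h2 : 0 < 2 * lam := by linarith
    rw [lt_div_iff₀ h2] at hη2; linarith
  have hS0 : 0 ≤ 4 * η ^ 2 * Λ ^ 2 * D ^ 2 + 8 * η * lam * D ^ 2 := by positivity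
  have hsq := Real.sq_sqrt hS0
  have hSnn := Real.sqrt_nonneg (4 * η ^ 2 * Λ ^ 2 * D ^ 2 + 8 * η * lam * D ^ 2)
  set S := Real.sqrt (4 * η ^ 2 * Λ ^ 2 * D ^ 2 + 8 * η * lam * D ^ 2) with hSdef
  have hSgt : 2 * η * Λ * D < S := by
    have hlt : (2 * η * Λ * D) ^ 2 < S ^ 2 := by
      rw [hsq]
      nlinarith [mul_pos (mul_pos hη hlam) (mul_pos hD hD)]
    exact lt_of_pow_lt_pow_left₀ 2 hSnn hlt
  have hz₀pos : 0 < z₀ := by rw [hz₀]; apply div_pos <;> linarith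
  have h4z : 4 * lam * z₀ = S - 2 * η * Λ * D := by
    rw [hz₀]; field_simp; ring
  have hkey8 : 8 * lam * (2 * lam * z₀ ^ 2 + 2 * η * Λ * D * z₀) = 8 * lam * (η * D ^ 2) := by
    linear_combination (4 * lam * z₀ + S + 2 * η * Λ * D) * h4z + hsq
  have hkey : 2 * lam * z₀ ^ 2 + 2 * η * Λ * D * z₀ = η * D ^ 2 :=
    mul_left_cancel₀ (by positivity) hkey8
  have hsmall' : η ^ 2 * Λ * D ≤ z₀ * (1 - 2 * η * lam) := by
    rw [div_le_iff₀ h1] at hsmall; linarith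
  have hz2 : Real.sqrt (z₀ ^ 2) = z₀ := Real.sqrt_sq hz₀pos.le
  -- preservation of the level z₀^2 - ε
  have hpres : ∀ ε : ℝ, 0 ≤ ε → ∀ k, z₀ ^ 2 - ε ≤ R k → z₀ ^ 2 - ε ≤ R (k + 1) := by
    intro ε hε k hk
    have hs2 : Real.sqrt (R k) ^ 2 = R k := Real.sq_sqrt (hRnonneg k)
    have hsnn : 0 ≤ Real.sqrt (R k) := Real.sqrt_nonneg _
    have hr := hrec k
    rw [← hs2] at hr hk
    rw [Real.sqrt_sq hsnn] at hr
    rcases le_or_gt (z₀ ^ 2) (Real.sqrt (R k) ^ 2) with hc | hc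
    · have hsz : z₀ ≤ Real.sqrt (R k) := by
        rw [← hz2]
        calc Real.sqrt (z₀ ^ 2) ≤ Real.sqrt (Real.sqrt (R k) ^ 2) := Real.sqrt_le_sqrt hc
        _ = Real.sqrt (R k) := Real.sqrt_sq hsnn
      have hfac : (0:ℝ) ≤ (1 - 2 * η * lam) * (Real.sqrt (R k) + z₀) - 2 * η ^ 2 * Λ * D := by
        have := mul_le_mul_of_nonneg_left hsz h1.le
        nlinarith
      have hprod := mul_nonneg (sub_nonneg.2 hsz) hfac
      have hId : (1 - 2 * η * lam) * z₀ ^ 2 - 2 * η ^ 2 * Λ * D * z₀ + η ^ 2 * D ^ 2 = z₀ ^ 2 := by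
        linear_combination (-η) * hkey
      linarith [hprod, hId, hr]
    · have hsz : Real.sqrt (R k) ≤ z₀ := by
        rw [← hz2]
        calc Real.sqrt (R k) = Real.sqrt (Real.sqrt (R k) ^ 2) := (Real.sqrt_sq hsnn).symm
        _ ≤ Real.sqrt (z₀ ^ 2) := Real.sqrt_le_sqrt hc.le
      have h1' : 2 * lam * Real.sqrt (R k) ^ 2 + 2 * η * Λ * D * Real.sqrt (R k) ≤ η * D ^ 2 := by
        have := stmt4_aux_mono lam (2 * η * Λ * D) (Real.sqrt (R k)) z₀ hlam.le
          (by positivity) hsnn hsz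
        linarith [hkey]
      have h2' := mul_le_mul_of_nonneg_left h1' hη.le
      linarith [h2', hr, hk]
  -- the level is eventually reached
  have hreach : ∀ ε : ℝ, 0 < ε → ∃ N, z₀ ^ 2 - ε ≤ R N := by
    intro ε hε
    by_contra h
    push_neg at h
    have h0 : 0 ≤ z₀ ^ 2 - ε := le_trans (hRnonneg 0) (le_of_lt (h 0))
    set t := Real.sqrt (z₀ ^ 2 - ε) with ht
    have ht2 : t ^ 2 = z₀ ^ 2 - ε := Real.sq_sqrt h0
    have htnn : 0 ≤ t := Real.sqrt_nonneg _
    have htz : t < z₀ := by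
      rw [← hz2]
      exact Real.sqrt_lt_sqrt h0 (by linarith)
    set δ := η * (η * D ^ 2 - 2 * lam * t ^ 2 - 2 * η * Λ * D * t) with hδ
    have hδpos : 0 < δ := by
      apply mul_pos hη
      have := stmt4_aux_mono_strict lam (2 * η * Λ * D) t z₀ hlam (by positivity) htnn htz
      linarith [hkey]
    have hgrow : ∀ k : ℕ, R 0 + k * δ ≤ R k := by
      intro k
      induction k with
      | zero => simp
      | succ n ih =>
        have hs2 : Real.sqrt (R n) ^ 2 = R n := Real.sq_sqrt (hRnonneg n)
        have hsnn : 0 ≤ Real.sqrt (R n) := Real.sqrt_nonneg _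
        have hst : Real.sqrt (R n) ≤ t := by
          rw [ht]
          calc Real.sqrt (R n) = Real.sqrt (Real.sqrt (R n) ^ 2) := (Real.sqrt_sq hsnn).symm
          _ ≤ Real.sqrt (z₀ ^ 2 - ε) := Real.sqrt_le_sqrt (by rw [hs2]; exact (h n).le)
        have hr := hrec n
        rw [← hs2] at hr
        rw [Real.sqrt_sq hsnn] at hr
        have hmt : 2 * lam * Real.sqrt (R n) ^ 2 + 2 * η * Λ * D * Real.sqrt (R n)
            ≤ 2 * lam * t ^ 2 + 2 * η * Λ * D * t :=
          stmt4_aux_mono lam (2 * η * Λ * D) (Real.sqrt (R n)) t hlam.le (by positivity) hsnn hst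
        have hmt' := mul_le_mul_of_nonneg_left hmt hη.le
        have hstep : R n + δ ≤ R (n + 1) := by
          rw [hδ, ← hs2]
          linarith [hmt', hr]
        push_cast
        linarith
    obtain ⟨k, hk⟩ := exists_nat_gt ((M - R 0) / δ)
    have hgk := hgrow k
    have hk' : M - R 0 < k * δ := by
      rw [div_lt_iff₀ hδpos] at hk; linarith
    have := hM k
    linarith
  have main : ∀ ε : ℝ, 0 < ε → z₀ ^ 2 - ε ≤ Filter.liminf R Filter.atTop := by
    intro ε hε
    obtain ⟨N, hN⟩ := hreach ε hε
    have hev : ∀ᶠ k in Filter.atTop, z₀ ^ 2 - ε ≤ R k := by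
      rw [Filter.eventually_atTop]
      refine ⟨N, fun n hn => ?_⟩
      obtain ⟨m, rfl⟩ := Nat.exists_eq_add_of_le hn
      clear hn
      induction m with
      | zero => simpa using hN
      | succ p ih => exact hpres ε hε.le (N + p) ih
    refine Filter.le_liminf_of_le ?_ hev
    exact (Filter.isBoundedUnder_of ⟨M, fun k => hM k⟩).isCoboundedUnder_ge
  rw [ge_iff_le]
  refine le_of_forall_pos_le_add fun ε hε => ?_
  linarith [main ε hε]
end

section
/- Let f, f_1, ..., f_J : ℝ^d → ℝ be differentiable with ∇f = (1/J) Σ_j ∇f_j, and suppose ∇f is λ₀-Lipschitz and each ∇f_j is λ_j-Lipschitz. Let θ† satisfy ∇f(θ†) = 0, D₀ = ((1/J)Σ_j |∇f_j(θ†)|²)^{1/2}, Λ = ((1/J)Σ_j λ_j²)^{1/2}, and 0 < η < 1/λ₀. If θ_{k+1} = θ_k - η ∇f_{γ_k}(θ_k) where γ_k is uniform on {1,...,J} independent of θ_k, and R_k = E|θ_k - θ†|², then R_{k+1} - R_k ≥ -2ηλ₀ R_k - 2η²Λ D₀ √(R_k) + η² D₀². -/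
/-!
Expanding the square, `|θ_{k+1} - θ†|² = |θ_k - θ†|² - 2η⟨θ_k - θ†, ∇f_γ(θ_k)⟩ + η²|∇f_γ(θ_k)|²`,
and since `γ_k` is uniform and independent of `θ_k`, its expectation is the expectation of the
average over `j` of the right-hand side. Pointwise, the cross term averages to
`⟨θ_k - θ†, ∇f(θ_k) - ∇f(θ†)⟩ ≤ λ₀|θ_k - θ†|²`, while `|∇f_j(θ_k)| ≥ |∇f_j(θ†)| - λ_j|θ_k - θ†|`
and Cauchy–Schwarz over `j` give `avg |∇f_j(θ_k)|² ≥ D₀² - 2ΛD₀|θ_k - θ†|`. Taking expectations,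
Jensen's inequality `E|θ_k - θ†| ≤ √R_k` finishes the proof.
-/

open MeasureTheory ProbabilityTheory
open scoped ENNReal

lemma Real.mul_sum_mul_le_sqrt_mul_sqrt {ι : Type*} (s : Finset ι) {c : ℝ} (hc : 0 ≤ c)
    (f g : ι → ℝ) :
    c * ∑ i ∈ s, f i * g i ≤ √(c * ∑ i ∈ s, f i ^ 2) * √(c * ∑ i ∈ s, g i ^ 2) :=
  calc c * ∑ i ∈ s, f i * g i ≤ c * (√(∑ i ∈ s, f i ^ 2) * √(∑ i ∈ s, g i ^ 2)) :=
        mul_le_mul_of_nonneg_left (Real.sum_mul_le_sqrt_mul_sqrt s f g) hc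
    _ = (√c * √c) * (√(∑ i ∈ s, f i ^ 2) * √(∑ i ∈ s, g i ^ 2)) := by
        rw [Real.mul_self_sqrt hc]
    _ = _ := by rw [Real.sqrt_mul hc, Real.sqrt_mul hc]; ring

section NormedGroup

variable {F : Type*} [SeminormedAddCommGroup F]

lemma sq_norm_sub_two_mul_norm_mul_norm_sub_le (a b : F) :
    ‖b‖ ^ 2 - 2 * ‖b‖ * ‖a - b‖ ≤ ‖a‖ ^ 2 := by
  have h : ‖b‖ - ‖a‖ ≤ ‖a - b‖ := norm_sub_rev a b ▸ norm_sub_norm_le b a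
  nlinarith [norm_nonneg b, sq_nonneg (‖a‖ - ‖b‖)]

lemma le_mul_sum_sq_norm_of_norm_sub_le {ι : Type*} (s : Finset ι) {c r : ℝ} (hc : 0 ≤ c)
    (hr : 0 ≤ r) {a b : ι → F} {L : ι → ℝ} (hab : ∀ j ∈ s, ‖a j - b j‖ ≤ L j * r) :
    c * ∑ j ∈ s, ‖b j‖ ^ 2 - 2 * √(c * ∑ j ∈ s, L j ^ 2) * √(c * ∑ j ∈ s, ‖b j‖ ^ 2) * r
      ≤ c * ∑ j ∈ s, ‖a j‖ ^ 2 := by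
  have hterm : ∀ j ∈ s, ‖b j‖ ^ 2 - 2 * r * (L j * ‖b j‖) ≤ ‖a j‖ ^ 2 := fun j hj => by
    have := mul_le_mul_of_nonneg_left (hab j hj) (norm_nonneg (b j))
    linarith [sq_norm_sub_two_mul_norm_mul_norm_sub_le (a j) (b j)]
  have hsum := mul_le_mul_of_nonneg_left (Finset.sum_le_sum hterm) hc
  have hcs := mul_le_mul_of_nonneg_left (Real.mul_sum_mul_le_sqrt_mul_sqrt s hc L (‖b ·‖)) hr
  rw [Finset.sum_sub_distrib, ← Finset.mul_sum] at hsum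
  linarith

end NormedGroup

section InnerProductSpace

variable {E : Type*} [NormedAddCommGroup E] [InnerProductSpace ℝ E]

lemma norm_sub_smul_sub_sq (x y g : E) (η : ℝ) :
    ‖x - η • g - y‖ ^ 2 = ‖x - y‖ ^ 2 - 2 * η * inner ℝ (x - y) g + η ^ 2 * ‖g‖ ^ 2 := by
  rw [sub_right_comm, norm_sub_sq_real, real_inner_smul_right, norm_smul, Real.norm_eq_abs,
    mul_pow, sq_abs]
  ring

lemma inner_sub_le_mul_sq_of_norm_sub_le {G : E → E} {L : ℝ} {x y : E} (hy : G y = 0)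
    (hG : ‖G x - G y‖ ≤ L * ‖x - y‖) : inner ℝ (x - y) (G x) ≤ L * ‖x - y‖ ^ 2 :=
  calc inner ℝ (x - y) (G x) = inner ℝ (x - y) (G x - G y) := by rw [hy, sub_zero]
    _ ≤ ‖x - y‖ * ‖G x - G y‖ := real_inner_le_norm _ _
    _ ≤ ‖x - y‖ * (L * ‖x - y‖) := by gcongr
    _ = L * ‖x - y‖ ^ 2 := by ring

lemma le_mul_sum_norm_sub_smul_sub_sq {ι : Type*} [Fintype ι] {c L η : ℝ} {Lj : ι → ℝ}
    {G : E → E} {g : ι → E → E} {x y : E} (hc : c * Fintype.card ι = 1) (hη : 0 ≤ η)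
    (hG : G x = c • ∑ j, g j x) (hy : G y = 0) (hLip : ‖G x - G y‖ ≤ L * ‖x - y‖)
    (hLipj : ∀ j, ‖g j x - g j y‖ ≤ Lj j * ‖x - y‖) :
    (1 - 2 * η * L) * ‖x - y‖ ^ 2
        - 2 * η ^ 2 * √(c * ∑ j, Lj j ^ 2) * √(c * ∑ j, ‖g j y‖ ^ 2) * ‖x - y‖
        + η ^ 2 * √(c * ∑ j, ‖g j y‖ ^ 2) ^ 2
      ≤ c * ∑ j, ‖x - η • g j x - y‖ ^ 2 := by
  have hc0 : 0 ≤ c := by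
    by_contra! h
    nlinarith [(Fintype.card ι).cast_nonneg (α := ℝ)]
  have hexpand : c * ∑ j, ‖x - η • g j x - y‖ ^ 2
      = ‖x - y‖ ^ 2 - 2 * η * inner ℝ (x - y) (G x) + η ^ 2 * (c * ∑ j, ‖g j x‖ ^ 2) := by
    simp only [norm_sub_smul_sub_sq, Finset.sum_add_distrib, Finset.sum_sub_distrib,
      Finset.sum_const, Finset.card_univ, nsmul_eq_mul, ← Finset.mul_sum, hG,
      real_inner_smul_right, inner_sum]
    linear_combination ‖x - y‖ ^ 2 * hc
  have hcross := inner_sub_le_mul_sq_of_norm_sub_le hy hLip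
  have hgrad := le_mul_sum_sq_norm_of_norm_sub_le Finset.univ hc0 (norm_nonneg (x - y))
    (a := (g · x)) (b := (g · y)) fun j _ => hLipj j
  rw [hexpand, Real.sq_sqrt (by positivity)]
  nlinarith [mul_le_mul_of_nonneg_left hcross hη, mul_le_mul_of_nonneg_left hgrad (sq_nonneg η)]

end InnerProductSpace

lemma LipschitzWith.memLp_comp {α E F : Type*} [MeasurableSpace α] {μ : Measure α}
    [IsFiniteMeasure μ] [NormedAddCommGroup E] [NormedAddCommGroup F] {K : NNReal} {p : ℝ≥0∞}
    {g : E → F} (hg : LipschitzWith K g) {f : α → E} (hf : MemLp f p μ) :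
    MemLp (fun a => g (f a)) p μ := by
  have h0 : MemLp ((fun x => g x - g 0) ∘ f) p μ :=
    (hg.sub (LipschitzWith.const (g 0))).comp_memLp (by simp) hf
  convert h0.add (memLp_const (g 0)) using 1
  funext a
  simp

lemma integrable_norm_sub_smul_sub_sq {Ω E : Type*} [MeasurableSpace Ω] {μ : Measure Ω}
    [IsFiniteMeasure μ] [NormedAddCommGroup E] [NormedSpace ℝ E] {K : NNReal} {g : E → E}
    (hg : LipschitzWith K g) {X : Ω → E} {y : E} (hX : MemLp (fun ω => X ω - y) 2 μ) (η : ℝ) :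
    Integrable (fun ω => ‖X ω - η • g (X ω) - y‖ ^ 2) μ := by
  have hX' : MemLp X 2 μ := by
    convert hX.add (memLp_const y) using 1
    funext ω
    simp
  have hstep := (hX'.sub ((hg.memLp_comp hX').const_smul η)).sub (memLp_const y)
  exact (memLp_two_iff_integrable_sq_norm hstep.1).1 hstep

lemma integral_comp_eq_sum_of_indepFun {Ω ι E : Type*} [MeasurableSpace Ω] {μ : Measure Ω}
    [Fintype ι] [MeasurableSpace ι] [MeasurableSingletonClass ι] [MeasurableSpace E]
    {γ : Ω → ι} {X : Ω → E} (hγ : Measurable γ) (hX : Measurable X) (hind : γ ⟂ᵢ[μ] X)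
    {F : ι → E → ℝ} (hF : ∀ j, Measurable (F j))
    (hFint : ∀ j, Integrable (fun ω => F j (X ω)) μ) :
    ∫ ω, F (γ ω) (X ω) ∂μ = ∑ j, μ.real {ω | γ ω = j} * ∫ ω, F j (X ω) ∂μ := by
  have hsplit : ∀ ω, F (γ ω) (X ω)
      = ∑ j, ({j} : Set ι).indicator (1 : ι → ℝ) (γ ω) * F j (X ω) := fun ω => by
    classical
    simp [Set.indicator_apply]
  have hprob : ∀ j, ∫ ω, ({j} : Set ι).indicator (1 : ι → ℝ) (γ ω) ∂μ
      = μ.real {ω | γ ω = j} := fun j => by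
    change ∫ ω, (γ ⁻¹' {j}).indicator 1 ω ∂μ = _
    rw [integral_indicator_one ((measurableSet_singleton j).preimage hγ)]
    rfl
  rw [integral_congr_ae (ae_of_all _ hsplit), integral_finsetSum]
  · refine Finset.sum_congr rfl fun j _ => ?_
    rw [← hprob j]
    exact hind.integral_comp_mul_comp hγ.aemeasurable hX.aemeasurable
      (measurable_of_countable (({j} : Set ι).indicator (1 : ι → ℝ))).aestronglyMeasurable
      (hF j).aestronglyMeasurable
  · intro j _
    refine (hFint j).bdd_mul (c := 1) ((measurable_of_countable
      (({j} : Set ι).indicator (1 : ι → ℝ))).comp hγ).aestronglyMeasurable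
      (ae_of_all _ fun ω => ?_)
    by_cases h : γ ω = j <;> simp [h]

lemma integral_le_sqrt_integral_sq {Ω : Type*} [MeasurableSpace Ω] {μ : Measure Ω}
    [IsProbabilityMeasure μ] {X : Ω → ℝ} (hX : MemLp X 2 μ) :
    ∫ ω, X ω ∂μ ≤ √(∫ ω, X ω ^ 2 ∂μ) := by
  refine Real.le_sqrt_of_sq_le ?_
  have hvar := variance_nonneg X μ
  rw [variance_eq_sub hX] at hvar
  simpa only [Pi.pow_apply, sub_nonneg] using hvar

lemma le_integral_of_quadratic_norm_le {Ω F : Type*} [MeasurableSpace Ω] {μ : Measure Ω}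
    [IsProbabilityMeasure μ] [NormedAddCommGroup F] {X : Ω → F} {Y : Ω → ℝ} {a b e : ℝ}
    (hX : MemLp X 2 μ) (hY : Integrable Y μ) (hb : 0 ≤ b)
    (h : ∀ ω, a * ‖X ω‖ ^ 2 - b * ‖X ω‖ + e ≤ Y ω) :
    a * ∫ ω, ‖X ω‖ ^ 2 ∂μ - b * √(∫ ω, ‖X ω‖ ^ 2 ∂μ) + e ≤ ∫ ω, Y ω ∂μ := by
  have hsq : Integrable (fun ω => ‖X ω‖ ^ 2) μ := hX.norm.integrable_sq
  have hnorm : Integrable (fun ω => ‖X ω‖) μ := hX.norm.integrable one_le_two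
  have hlin : Integrable (fun ω => a * ‖X ω‖ ^ 2 - b * ‖X ω‖) μ :=
    (hsq.const_mul a).sub (hnorm.const_mul b)
  have hmono := integral_mono (f := fun ω => a * ‖X ω‖ ^ 2 - b * ‖X ω‖ + e)
    (hlin.add (integrable_const e)) hY h
  rw [integral_add hlin (integrable_const e), integral_sub (hsq.const_mul a) (hnorm.const_mul b),
    integral_const_mul, integral_const_mul, integral_const, probReal_univ, one_smul] at hmono
  nlinarith [mul_le_mul_of_nonneg_left (integral_le_sqrt_integral_sq hX.norm) hb]

theorem stmt_5_general
    (d J : ℕ) (hJ : 0 < J)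
    (f : EuclideanSpace ℝ (Fin d) → ℝ) (fj : Fin J → EuclideanSpace ℝ (Fin d) → ℝ)
    (hsum : ∀ x, gradient f x = (J : ℝ)⁻¹ • ∑ j, gradient (fj j) x)
    (lam₀ : ℝ) (lamj : Fin J → ℝ)
    (hLip : ∀ x y, ‖gradient f x - gradient f y‖ ≤ lam₀ * ‖x - y‖)
    (hLipj : ∀ j x y, ‖gradient (fj j) x - gradient (fj j) y‖ ≤ lamj j * ‖x - y‖)
    (θdag : EuclideanSpace ℝ (Fin d)) (hθdag : gradient f θdag = 0)
    (D₀ Λ : ℝ)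
    (hD₀ : D₀ = Real.sqrt ((J : ℝ)⁻¹ * ∑ j, ‖gradient (fj j) θdag‖ ^ 2))
    (hΛ : Λ = Real.sqrt ((J : ℝ)⁻¹ * ∑ j, (lamj j) ^ 2))
    (η : ℝ) (hη : 0 < η)
    (Ω : Type*) [MeasurableSpace Ω] (μ : Measure Ω) [IsProbabilityMeasure μ]
    (γ : ℕ → Ω → Fin J) (θ : ℕ → Ω → EuclideanSpace ℝ (Fin d))
    (hγmeas : ∀ k, Measurable (γ k)) (hθmeas : ∀ k, Measurable (θ k))
    (hunif : ∀ k j, μ {ω | γ k ω = j} = (J : ℝ≥0∞)⁻¹)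
    (hindep : ∀ k, ProbabilityTheory.IndepFun (γ k) (θ k) μ)
    (hSGD : ∀ k ω, θ (k + 1) ω = θ k ω - η • gradient (fj (γ k ω)) (θ k ω))
    (R : ℕ → ℝ) (hR : ∀ k, R k = ∫ ω, ‖θ k ω - θdag‖ ^ 2 ∂μ)
    (hint : ∀ k, Integrable (fun ω => ‖θ k ω - θdag‖ ^ 2) μ) :
    ∀ k, R (k + 1) - R k ≥
      -2 * η * lam₀ * R k - 2 * η ^ 2 * Λ * D₀ * Real.sqrt (R k) + η ^ 2 * D₀ ^ 2 := by
  intro k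
  set F : Fin J → EuclideanSpace ℝ (Fin d) → ℝ :=
    fun j x => ‖x - η • gradient (fj j) x - θdag‖ ^ 2
  have hgradLip : ∀ j, LipschitzWith (lamj j).toNNReal (gradient (fj j)) := fun j =>
    LipschitzWith.of_dist_le' fun x y => by simpa only [dist_eq_norm] using hLipj j x y
  have hdist : MemLp (fun ω => θ k ω - θdag) 2 μ :=
    (memLp_two_iff_integrable_sq_norm ((hθmeas k).sub measurable_const).aestronglyMeasurable).2
      (hint k)
  have hFint : ∀ j, Integrable (fun ω => F j (θ k ω)) μ := fun j =>
    integrable_norm_sub_smul_sub_sq (hgradLip j) hdist η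
  have hFmeas : ∀ j, Measurable (F j) := fun j => by
    have := (hgradLip j).continuous
    exact Continuous.measurable (by fun_prop)
  have hnext : R (k + 1) = ∫ ω, (J : ℝ)⁻¹ * ∑ j, F j (θ k ω) ∂μ := by
    have hlaw := integral_comp_eq_sum_of_indepFun (hγmeas k) (hθmeas k) (hindep k) hFmeas hFint
    simp only [measureReal_def, hunif k, ENNReal.toReal_inv, ENNReal.toReal_natCast,
      ← Finset.mul_sum] at hlaw
    rw [hR, integral_const_mul, integral_finsetSum _ fun j _ => hFint j, ← hlaw]
    simp only [hSGD, F]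
  have hpoint : ∀ ω, (1 - 2 * η * lam₀) * ‖θ k ω - θdag‖ ^ 2
      - 2 * η ^ 2 * Λ * D₀ * ‖θ k ω - θdag‖ + η ^ 2 * D₀ ^ 2
        ≤ (J : ℝ)⁻¹ * ∑ j, F j (θ k ω) := fun ω => by
    subst hD₀ hΛ
    exact le_mul_sum_norm_sub_smul_sub_sq (by simp [hJ.ne']) hη.le (hsum _) hθdag (hLip _ _)
      fun j => hLipj j _ _
  have hΛD : 0 ≤ 2 * η ^ 2 * Λ * D₀ := by rw [hΛ, hD₀]; positivity
  have hlower := le_integral_of_quadratic_norm_le hdist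
    ((integrable_finsetSum _ fun j _ => hFint j).const_mul _) hΛD hpoint
  rw [← hR, ← hnext] at hlower
  linarith

theorem stmt_5
    (d J : ℕ) (hJ : 0 < J)
    (f : EuclideanSpace ℝ (Fin d) → ℝ) (fj : Fin J → EuclideanSpace ℝ (Fin d) → ℝ)
    (hdiff : ∀ x, DifferentiableAt ℝ f x)
    (hdiffj : ∀ j x, DifferentiableAt ℝ (fj j) x)
    (hsum : ∀ x, gradient f x = (J : ℝ)⁻¹ • ∑ j, gradient (fj j) x)
    (lam₀ : ℝ) (lamj : Fin J → ℝ) (hlam₀ : 0 < lam₀)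
    (hLip : ∀ x y, ‖gradient f x - gradient f y‖ ≤ lam₀ * ‖x - y‖)
    (hLipj : ∀ j x y, ‖gradient (fj j) x - gradient (fj j) y‖ ≤ lamj j * ‖x - y‖)
    (θdag : EuclideanSpace ℝ (Fin d)) (hθdag : gradient f θdag = 0)
    (D₀ Λ : ℝ)
    (hD₀ : D₀ = Real.sqrt ((J : ℝ)⁻¹ * ∑ j, ‖gradient (fj j) θdag‖ ^ 2))
    (hΛ : Λ = Real.sqrt ((J : ℝ)⁻¹ * ∑ j, (lamj j) ^ 2))
    (η : ℝ) (hη : 0 < η) (hηlam : η < 1 / lam₀)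
    (Ω : Type*) [MeasurableSpace Ω] (μ : Measure Ω) [IsProbabilityMeasure μ]
    (γ : ℕ → Ω → Fin J) (θ : ℕ → Ω → EuclideanSpace ℝ (Fin d))
    (hγmeas : ∀ k, Measurable (γ k)) (hθmeas : ∀ k, Measurable (θ k))
    (hunif : ∀ k j, μ {ω | γ k ω = j} = (J : ℝ≥0∞)⁻¹)
    (hindep : ∀ k, ProbabilityTheory.IndepFun (γ k) (θ k) μ)
    (hSGD : ∀ k ω, θ (k + 1) ω = θ k ω - η • gradient (fj (γ k ω)) (θ k ω))
    (R : ℕ → ℝ) (hR : ∀ k, R k = ∫ ω, ‖θ k ω - θdag‖ ^ 2 ∂μ)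
    (hint : ∀ k, Integrable (fun ω => ‖θ k ω - θdag‖ ^ 2) μ) :
    ∀ k, R (k + 1) - R k ≥
      -2 * η * lam₀ * R k - 2 * η ^ 2 * Λ * D₀ * Real.sqrt (R k) + η ^ 2 * D₀ ^ 2 :=
  stmt_5_general d J hJ f fj hsum lam₀ lamj hLip hLipj θdag hθdag D₀ Λ hD₀ hΛ η hη Ω μ γ θ hγmeas
    hθmeas hunif hindep hSGD R hR hint
end
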